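/- arXiv:2106.14473 — 2 statements merged into one kernel-verified Lean document; each statement's English description precedes it below -/
import Mathlib

section
/- Let d ∈ ℕ, T > 0, let D = (0,1)^d, let μ : ℝ^d → ℝ^d and σ : ℝ^d → ℝ^{d×d} be affine functions, and let u be a classical solution of the linear Kolmogorov PDE on D×[0,T]. If v ∈ C^2([0,T]×[0,1]^d) satisfies ‖u − v‖_{W^{2,∞}([0,T]×[0,1]^d)} ≤ ε for some ε > 0, then the residuals of v satisfy ‖R_i[v]‖_{L²(D×[0,T])} ≤ √T · sup_{x∈D̄}(1 + Σ_{i=1}^d |μ_i(x)| + ½ Σ_{i,j=1}^d |(σ(x)σ(x)^T)_{ij}|) · ε, ‖R_t[v]‖_{L²(D)} ≤ ε, and ‖R_s[v]‖_{L²(∂D×[0,T])} ≤ √(2dT) · ε. -/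
open MeasureTheory Matrix

/-- First-order partial derivative in direction `i`. -/
noncomputable def pd {n : ℕ} (f : (Fin n → ℝ) → ℝ) (i : Fin n) (x : Fin n → ℝ) : ℝ :=
  fderiv ℝ f x (Pi.single i 1)

/-- Second-order partial derivative in directions `i, j`. -/
noncomputable def pd2 {n : ℕ} (f : (Fin n → ℝ) → ℝ) (i j : Fin n) (x : Fin n → ℝ) : ℝ :=
  pd (pd f i) j x

/-- The spatial Kolmogorov operator
`L[v](x,t) = ½ Tr(σ(x)σ(x)ᵀ H_x[v](x,t)) + μ(x)·∇_x v(x,t)`. -/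
noncomputable def kolOp {d : ℕ} (μv : (Fin d → ℝ) → (Fin d → ℝ))
    (σm : (Fin d → ℝ) → Matrix (Fin d) (Fin d) ℝ)
    (v : (Fin d → ℝ) → ℝ → ℝ) (x : Fin d → ℝ) (t : ℝ) : ℝ :=
  (1 / 2) * ∑ i, ∑ j, (σm x * (σm x)ᵀ) i j * pd2 (fun y => v y t) i j x
    + ∑ i, μv x i * pd (fun y => v y t) i x

/-- Interior PINN residual `R_i[v](x,t) = ∂_t v(x,t) − L[v](x,t)`. -/
noncomputable def resInt {d : ℕ} (μv : (Fin d → ℝ) → (Fin d → ℝ))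
    (σm : (Fin d → ℝ) → Matrix (Fin d) (Fin d) ℝ)
    (v : (Fin d → ℝ) → ℝ → ℝ) (x : Fin d → ℝ) (t : ℝ) : ℝ :=
  deriv (v x) t - kolOp μv σm v x t

/-- The closed unit cube `[0,1]^d`. -/
def unitCube (d : ℕ) : Set (Fin d → ℝ) := Set.univ.pi fun _ => Set.Icc 0 1

/-- The open unit cube `D = (0,1)^d`. -/
def openCube (d : ℕ) : Set (Fin d → ℝ) := Set.univ.pi fun _ => Set.Ioo 0 1

/-!
Since the interior residual is linear in `v` and vanishes on `u`, `R_i[v] = -R_i[u - v]`. The time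
derivative and the spatial first and second partial derivatives of `w = u - v` are values of the
first two Fréchet derivatives of `(x, t) ↦ w x t` at unit vectors, so each is at most `ε` in
absolute value; hence `|R_i[v](x, t)| ≤ (1 + Σᵢ |μᵢ(x)| + ½ Σᵢⱼ |(σσᵀ)ᵢⱼ(x)|) ε` in the interior.
The coefficient is continuous because `μ` and `σ` are affine, so it is bounded by its supremum
over the compact cube. The three `L²` bounds follow by integrating these pointwise bounds over the
cube and each of its `2d` faces (all of measure `1`) and over `[0, T]`.
-/

section PartialDerivatives

variable {E F G : Type*} [NormedAddCommGroup E] [NormedSpace ℝ E] [NormedAddCommGroup F]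
  [NormedSpace ℝ F] [NormedAddCommGroup G] [NormedSpace ℝ G]

theorem fderiv_comp_prodMk_left_apply {W : E × F → G} {x : E} {t : F}
    (hW : DifferentiableAt ℝ W (x, t)) (a : E) :
    fderiv ℝ (fun y => W (y, t)) x a = fderiv ℝ W (x, t) (a, 0) := by
  have h : HasFDerivAt (fun y => W (y, t)) ((fderiv ℝ W (x, t)).comp (.inl ℝ E F)) x :=
    hW.hasFDerivAt.comp x (hasFDerivAt_prodMk_left x t)
  rw [h.fderiv]
  rfl

theorem deriv_comp_prodMk_right {W : E × ℝ → G} {x : E} {t : ℝ}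
    (hW : DifferentiableAt ℝ W (x, t)) :
    deriv (fun s => W (x, s)) t = fderiv ℝ W (x, t) (0, 1) :=
  (hW.hasFDerivAt.comp_hasDerivAt t ((hasDerivAt_const t x).prodMk (hasDerivAt_id t))).deriv

end PartialDerivatives

section Jets

open Function

variable {d : ℕ} {v : (Fin d → ℝ) → ℝ → ℝ} {x : Fin d → ℝ} {t : ℝ}

theorem deriv_eq_iteratedFDeriv_one (hv : DifferentiableAt ℝ (uncurry v) (x, t)) :
    deriv (v x) t = iteratedFDeriv ℝ 1 (uncurry v) (x, t) ![(0, 1)] := by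
  rw [iteratedFDeriv_one_apply]
  exact deriv_comp_prodMk_right hv

theorem pd_eq_iteratedFDeriv_one (hv : DifferentiableAt ℝ (uncurry v) (x, t)) (i : Fin d) :
    pd (fun y => v y t) i x = iteratedFDeriv ℝ 1 (uncurry v) (x, t) ![(Pi.single i 1, 0)] := by
  rw [iteratedFDeriv_one_apply]
  exact fderiv_comp_prodMk_left_apply hv _

theorem pd2_eq_iteratedFDeriv_two (hv : ContDiffAt ℝ 2 (uncurry v) (x, t)) (i j : Fin d) :
    pd2 (fun y => v y t) i j x
      = iteratedFDeriv ℝ 2 (uncurry v) (x, t) ![(Pi.single j 1, 0), (Pi.single i 1, 0)] := by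
  have hv' : ∀ᶠ y in nhds x, DifferentiableAt ℝ (uncurry v) (y, t) :=
    (continuous_id.prodMk continuous_const).continuousAt.eventually
      ((hv.eventually (by simp)).mono fun _ h => h.differentiableAt two_ne_zero)
  have hDv : DifferentiableAt ℝ (fderiv ℝ (uncurry v)) (x, t) :=
    (hv.fderiv_right (m := 1) le_rfl).differentiableAt one_ne_zero
  have hpd : pd (fun y => v y t) i =ᶠ[nhds x]
      fun y => fderiv ℝ (uncurry v) (y, t) (Pi.single i 1, 0) :=
    hv'.mono fun y hy => fderiv_comp_prodMk_left_apply hy _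
  rw [iteratedFDeriv_two_apply, pd2, pd, hpd.fderiv_eq,
    fderiv_comp_prodMk_left_apply (hDv.clm_apply (differentiableAt_const _)),
    fderiv_clm_apply hDv (differentiableAt_const _)]
  simp

end Jets

section Residual

variable {d : ℕ}

/-- `resInt` with `∂ₜ v`, `∂ᵢ v` and `pd2 v i j = ∂ⱼ∂ᵢ v` read off the first two derivatives
`D₁`, `D₂` of `(x, t) ↦ v x t` at unit vectors. -/
noncomputable def jetResInt (a : Fin d → ℝ) (A : Matrix (Fin d) (Fin d) ℝ)
    (D₁ : (Fin d → ℝ) × ℝ [×1]→L[ℝ] ℝ) (D₂ : (Fin d → ℝ) × ℝ [×2]→L[ℝ] ℝ) : ℝ :=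
  D₁ ![(0, 1)] - ((1 / 2) * ∑ i, ∑ j, A i j * D₂ ![(Pi.single j 1, 0), (Pi.single i 1, 0)]
    + ∑ i, a i * D₁ ![(Pi.single i 1, 0)])

theorem jetResInt_sub (a : Fin d → ℝ) (A : Matrix (Fin d) (Fin d) ℝ)
    (D₁ D₁' : (Fin d → ℝ) × ℝ [×1]→L[ℝ] ℝ) (D₂ D₂' : (Fin d → ℝ) × ℝ [×2]→L[ℝ] ℝ) :
    jetResInt a A (D₁ - D₁') (D₂ - D₂') = jetResInt a A D₁ D₂ - jetResInt a A D₁' D₂' := by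
  simp only [jetResInt, _root_.sub_apply, mul_sub, Finset.sum_sub_distrib]
  ring

noncomputable def kolCoeffBound (μv : (Fin d → ℝ) → (Fin d → ℝ))
    (σm : (Fin d → ℝ) → Matrix (Fin d) (Fin d) ℝ) (x : Fin d → ℝ) : ℝ :=
  1 + ∑ i, |μv x i| + (1 / 2) * ∑ i, ∑ j, |(σm x * (σm x)ᵀ) i j|

theorem kolCoeffBound_nonneg (μv : (Fin d → ℝ) → (Fin d → ℝ))
    (σm : (Fin d → ℝ) → Matrix (Fin d) (Fin d) ℝ) (x : Fin d → ℝ) :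
    0 ≤ kolCoeffBound μv σm x := by
  unfold kolCoeffBound
  positivity

theorem abs_apply_le_of_norm_le {E : Type*} [NormedAddCommGroup E] [NormedSpace ℝ E] {n : ℕ}
    {D : E [×n]→L[ℝ] ℝ} {ε : ℝ} (hD : ‖D‖ ≤ ε) {m : Fin n → E} (hm : ∀ k, ‖m k‖ ≤ 1) :
    |D m| ≤ ε := by
  simpa using D.le_mul_prod_of_opNorm_le_of_le hD hm

theorem abs_sum_mul_le {ι : Type*} (s : Finset ι) (a b : ι → ℝ) {ε : ℝ}
    (hb : ∀ i ∈ s, |b i| ≤ ε) : |∑ i ∈ s, a i * b i| ≤ (∑ i ∈ s, |a i|) * ε := by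
  rw [Finset.sum_mul]
  refine (Finset.abs_sum_le_sum_abs _ _).trans (Finset.sum_le_sum fun i hi => ?_)
  rw [abs_mul]
  exact mul_le_mul_of_nonneg_left (hb i hi) (abs_nonneg _)

theorem abs_jetResInt_le (a : Fin d → ℝ) (A : Matrix (Fin d) (Fin d) ℝ)
    {D₁ : (Fin d → ℝ) × ℝ [×1]→L[ℝ] ℝ} {D₂ : (Fin d → ℝ) × ℝ [×2]→L[ℝ] ℝ} {ε : ℝ}
    (h₁ : ‖D₁‖ ≤ ε) (h₂ : ‖D₂‖ ≤ ε) :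
    |jetResInt a A D₁ D₂| ≤ (1 + ∑ i, |a i| + (1 / 2) * ∑ i, ∑ j, |A i j|) * ε := by
  have hnorm : ∀ i : Fin d, ‖((Pi.single i 1 : Fin d → ℝ), (0 : ℝ))‖ ≤ 1 := fun i => by
    simp [Prod.norm_def, Pi.norm_single]
  have ht : |D₁ ![(0, 1)]| ≤ ε := abs_apply_le_of_norm_le h₁ (by simp [Prod.norm_def])
  have hx : |∑ i, a i * D₁ ![(Pi.single i 1, 0)]| ≤ (∑ i, |a i|) * ε :=
    abs_sum_mul_le _ _ _ fun i _ => abs_apply_le_of_norm_le h₁ (Fin.forall_fin_one.2 (hnorm i))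
  have hxx : |∑ i, ∑ j, A i j * D₂ ![(Pi.single j 1, 0), (Pi.single i 1, 0)]|
      ≤ (∑ i, ∑ j, |A i j|) * ε := by
    simpa only [← Finset.sum_product'] using abs_sum_mul_le (Finset.univ ×ˢ Finset.univ)
      (fun p => A p.1 p.2) (fun p => D₂ ![(Pi.single p.2 1, 0), (Pi.single p.1 1, 0)])
      fun p _ => abs_apply_le_of_norm_le h₂ (Fin.forall_fin_two.2 ⟨hnorm p.2, hnorm p.1⟩)
  rw [jetResInt, abs_le]
  rw [abs_le] at ht hx hxx
  constructor <;> linarith [ht.1, ht.2, hx.1, hx.2, hxx.1, hxx.2]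

end Residual

section PointwiseBound

open Function

variable {d : ℕ} (μv : (Fin d → ℝ) → (Fin d → ℝ)) (σm : (Fin d → ℝ) → Matrix (Fin d) (Fin d) ℝ)
  {u v : (Fin d → ℝ) → ℝ → ℝ} {x : Fin d → ℝ} {t : ℝ}

theorem resInt_eq_jetResInt (hv : ContDiffAt ℝ 2 (uncurry v) (x, t)) :
    resInt μv σm v x t = jetResInt (μv x) (σm x * (σm x)ᵀ)
      (iteratedFDeriv ℝ 1 (uncurry v) (x, t)) (iteratedFDeriv ℝ 2 (uncurry v) (x, t)) := by
  have hv₁ := hv.differentiableAt two_ne_zero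
  simp only [resInt, kolOp, jetResInt, deriv_eq_iteratedFDeriv_one hv₁,
    pd_eq_iteratedFDeriv_one hv₁, pd2_eq_iteratedFDeriv_two hv]

theorem abs_resInt_le_of_iteratedFDeriv_sub_le (hu : ContDiffAt ℝ 2 (uncurry u) (x, t))
    (hv : ContDiffAt ℝ 2 (uncurry v) (x, t)) (hpde : deriv (u x) t = kolOp μv σm u x t)
    {ε : ℝ} (h₁ : ‖iteratedFDeriv ℝ 1 (uncurry u - uncurry v) (x, t)‖ ≤ ε)
    (h₂ : ‖iteratedFDeriv ℝ 2 (uncurry u - uncurry v) (x, t)‖ ≤ ε) :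
    |resInt μv σm v x t| ≤ kolCoeffBound μv σm x * ε := by
  have hres : resInt μv σm v x t = resInt μv σm u x t - jetResInt (μv x) (σm x * (σm x)ᵀ)
      (iteratedFDeriv ℝ 1 (uncurry u - uncurry v) (x, t))
      (iteratedFDeriv ℝ 2 (uncurry u - uncurry v) (x, t)) := by
    rw [iteratedFDeriv_sub_apply (hu.of_le one_le_two) (hv.of_le one_le_two),
      iteratedFDeriv_sub_apply hu hv, jetResInt_sub, resInt_eq_jetResInt μv σm hu,
      resInt_eq_jetResInt μv σm hv, sub_sub_cancel]
  rw [hres, resInt, hpde, sub_self, zero_sub, abs_neg]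
  exact abs_jetResInt_le _ _ h₁ h₂

end PointwiseBound

section SquareIntegrals

variable {α : Type*} [MeasurableSpace α] {μ : Measure α} {s : Set α} {c : ℝ}

theorem norm_setIntegral_sq_le (hs : μ s < ⊤) {f : α → ℝ} (hf : ∀ x ∈ s, |f x| ≤ c) :
    ‖∫ x in s, f x ^ 2 ∂μ‖ ≤ c ^ 2 * μ.real s :=
  norm_setIntegral_le_of_norm_le_const hs fun x hx => by
    rw [Real.norm_eq_abs, abs_pow]
    exact pow_le_pow_left₀ (abs_nonneg _) (hf x hx) 2

theorem integral_Icc_setIntegral_sq_le (hs : μ s < ⊤) {T : ℝ} (hT : 0 ≤ T) {f : α → ℝ → ℝ}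
    (hf : ∀ x ∈ s, ∀ t ∈ Set.Ioo 0 T, |f x t| ≤ c) :
    ∫ t in Set.Icc 0 T, ∫ x in s, f x t ^ 2 ∂μ ≤ c ^ 2 * μ.real s * T := by
  rw [integral_Icc_eq_integral_Ioo]
  calc _ ≤ ‖∫ t in Set.Ioo 0 T, ∫ x in s, f x t ^ 2 ∂μ‖ := Real.le_norm_self _
    _ ≤ c ^ 2 * μ.real s * volume.real (Set.Ioo 0 T) :=
      norm_setIntegral_le_of_norm_le_const measure_Ioo_lt_top fun t ht =>
        norm_setIntegral_sq_le hs fun x hx => hf x hx t ht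
    _ = c ^ 2 * μ.real s * T := by rw [Real.volume_real_Ioo_of_le hT, sub_zero]

theorem Real.sqrt_le_sqrt_mul_of_le_sq_mul {x a c : ℝ} (hc : 0 ≤ c) (h : x ≤ c ^ 2 * a) :
    √x ≤ √a * c :=
  (Real.sqrt_le_sqrt h).trans_eq (by rw [Real.sqrt_mul (sq_nonneg c), Real.sqrt_sq hc, mul_comm])

end SquareIntegrals

section Cubes

variable {d : ℕ}

theorem openCube_subset_unitCube : openCube d ⊆ unitCube d :=
  Set.pi_mono fun _ _ => Set.Ioo_subset_Icc_self

theorem isCompact_unitCube : IsCompact (unitCube d) :=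
  isCompact_univ_pi fun _ => isCompact_Icc

theorem unitCube_mem_nhds {x : Fin d → ℝ} (hx : x ∈ openCube d) : unitCube d ∈ nhds x :=
  set_pi_mem_nhds Set.finite_univ fun i _ => Icc_mem_nhds (hx i trivial).1 (hx i trivial).2

theorem volume_openCube : volume (openCube d) = 1 := by
  simp [openCube, volume_pi_pi]

theorem volume_unitCube : volume (unitCube d) = 1 := by
  simp [unitCube, volume_pi_pi, -Set.pi_univ_Icc]

theorem update_mem_unitCube {y : Fin d → ℝ} (hy : y ∈ unitCube d) (i : Fin d) {c : ℝ}
    (hc : c ∈ Set.Icc (0 : ℝ) 1) : Function.update y i c ∈ unitCube d :=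
  (Set.update_mem_pi_iff_of_mem hy).2 fun _ => hc

theorem kolCoeffBound_le_iSup (μA : (Fin d → ℝ) →ᵃ[ℝ] (Fin d → ℝ))
    (σA : (Fin d → ℝ) →ᵃ[ℝ] Matrix (Fin d) (Fin d) ℝ) {x : Fin d → ℝ} (hx : x ∈ unitCube d) :
    kolCoeffBound μA σA x ≤ ⨆ y : unitCube d, kolCoeffBound μA σA y := by
  have hμ := μA.continuous_of_finiteDimensional
  have hσ := AffineMap.continuous_linear_iff.mp σA.linear.continuous_of_finiteDimensional
  have hg : Continuous (kolCoeffBound μA σA) := by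
    unfold kolCoeffBound
    fun_prop
  exact le_ciSup_set (isCompact_unitCube.bddAbove_image hg.continuousOn) hx

theorem integral_face_sq_le {f : (Fin d → ℝ) → ℝ → ℝ} {T ε : ℝ} (hT : 0 ≤ T)
    (hf : ∀ x ∈ unitCube d, ∀ t ∈ Set.Icc 0 T, |f x t| ≤ ε) (i : Fin d) (c : Fin 2) :
    ∫ t in Set.Icc 0 T, ∫ y in unitCube d, f (Function.update y i ((c : ℕ) : ℝ)) t ^ 2
      ≤ ε ^ 2 * T := by
  have hc : ((c : ℕ) : ℝ) ∈ Set.Icc (0 : ℝ) 1 :=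
    ⟨Nat.cast_nonneg _, Nat.cast_le_one.2 (Nat.le_of_lt_succ c.isLt)⟩
  refine (integral_Icc_setIntegral_sq_le (by simp [volume_unitCube]) hT fun y hy t ht =>
    hf _ (update_mem_unitCube hy i hc) t (Set.Ioo_subset_Icc_self ht)).trans_eq ?_
  simp [measureReal_def, volume_unitCube]

end Cubes

/-- **Small residuals from `W^{2,∞}`-approximation of the solution.**
If `u` is a classical solution of the linear Kolmogorov PDE (`μ, σ` affine) on
`D×[0,T]`, `D = (0,1)^d`, and `v ∈ C²` satisfies `‖u − v‖_{W^{2,∞}} ≤ ε`, then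
`‖R_i[v]‖_{L²(D×[0,T])} ≤ √T · sup_{x∈D̄}(1 + Σᵢ|μᵢ| + ½ Σᵢⱼ|(σσᵀ)ᵢⱼ|) · ε`,
`‖R_t[v]‖_{L²(D)} ≤ ε` and `‖R_s[v]‖_{L²(∂D×[0,T])} ≤ √(2dT) · ε`, where
`φ, ψ` are the traces of `u` and the boundary integral is the sum over the `2d` faces. -/
theorem residuals_small_of_W2inf_close
    {d : ℕ} (T : ℝ) (hT : 0 < T) (ε : ℝ) (hε : 0 < ε)
    (μA : (Fin d → ℝ) →ᵃ[ℝ] (Fin d → ℝ))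
    (σA : (Fin d → ℝ) →ᵃ[ℝ] Matrix (Fin d) (Fin d) ℝ)
    (u v : (Fin d → ℝ) → ℝ → ℝ)
    (hu : ContDiffOn ℝ 2 (fun p : (Fin d → ℝ) × ℝ => u p.1 p.2)
      (unitCube d ×ˢ Set.Icc 0 T))
    (hv : ContDiffOn ℝ 2 (fun p : (Fin d → ℝ) × ℝ => v p.1 p.2)
      (unitCube d ×ˢ Set.Icc 0 T))
    (hpde : ∀ x ∈ openCube d, ∀ t ∈ Set.Icc (0 : ℝ) T,
      deriv (u x) t = kolOp (fun y => μA y) (fun y => σA y) u x t)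
    (hclose : ∀ k : ℕ, k ≤ 2 → ∀ x ∈ unitCube d, ∀ t ∈ Set.Icc (0 : ℝ) T,
      ‖iteratedFDeriv ℝ k (fun p : (Fin d → ℝ) × ℝ => u p.1 p.2 - v p.1 p.2) (x, t)‖ ≤ ε) :
    Real.sqrt (∫ t in Set.Icc (0 : ℝ) T, ∫ x in openCube d,
        (resInt (fun y => μA y) (fun y => σA y) v x t) ^ 2)
      ≤ Real.sqrt T *
        (⨆ x : unitCube d, (1 + ∑ i, |μA (x : Fin d → ℝ) i|
          + (1 / 2) * ∑ i, ∑ j,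
            |(σA (x : Fin d → ℝ) * (σA (x : Fin d → ℝ))ᵀ) i j|)) * ε ∧
    Real.sqrt (∫ x in openCube d, (v x 0 - u x 0) ^ 2) ≤ ε ∧
    Real.sqrt (∑ i : Fin d, ∑ c : Fin 2, ∫ t in Set.Icc (0 : ℝ) T, ∫ y in unitCube d,
        (v (Function.update y i ((c : ℕ) : ℝ)) t
          - u (Function.update y i ((c : ℕ) : ℝ)) t) ^ 2)
      ≤ Real.sqrt (2 * d * T) * ε := by
  have hT₀ := hT.le
  have hε₀ := hε.le
  have hres : ∀ x ∈ openCube d, ∀ t ∈ Set.Ioo 0 T,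
      |resInt (fun y => μA y) (fun y => σA y) v x t|
        ≤ (⨆ y : unitCube d, kolCoeffBound (fun y => μA y) (fun y => σA y) y) * ε := by
    intro x hx t ht
    have hnhds := prod_mem_nhds (unitCube_mem_nhds hx) (Icc_mem_nhds ht.1 ht.2)
    have hx' := openCube_subset_unitCube hx
    have ht' := Set.Ioo_subset_Icc_self ht
    exact (abs_resInt_le_of_iteratedFDeriv_sub_le _ _ (hu.contDiffAt hnhds)
      (hv.contDiffAt hnhds) (hpde x hx t ht') (hclose 1 one_le_two x hx' t ht')
      (hclose 2 le_rfl x hx' t ht')).trans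
        (mul_le_mul_of_nonneg_right (kolCoeffBound_le_iSup μA σA hx') hε₀)
  have hdiff : ∀ x ∈ unitCube d, ∀ t ∈ Set.Icc 0 T, |v x t - u x t| ≤ ε := fun x hx t ht => by
    simpa [abs_sub_comm] using hclose 0 (Nat.zero_le _) x hx t ht
  refine ⟨?_, ?_, ?_⟩
  · rw [mul_assoc]
    refine Real.sqrt_le_sqrt_mul_of_le_sq_mul
      (mul_nonneg (Real.iSup_nonneg fun _ => kolCoeffBound_nonneg _ _ _) hε₀) ?_
    refine (integral_Icc_setIntegral_sq_le (by simp [volume_openCube]) hT₀ hres).trans_eq ?_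
    rw [measureReal_def, volume_openCube, ENNReal.toReal_one, mul_one]
    rfl
  · refine Real.sqrt_le_iff.mpr ⟨hε₀, (Real.le_norm_self _).trans ?_⟩
    refine (norm_setIntegral_sq_le (by simp [volume_openCube])
      fun x hx => hdiff x (openCube_subset_unitCube hx) 0 ⟨le_rfl, hT₀⟩).trans_eq ?_
    simp [measureReal_def, volume_openCube]
  · refine Real.sqrt_le_sqrt_mul_of_le_sq_mul hε₀ ((Finset.sum_le_sum fun i _ =>
      Finset.sum_le_sum fun c _ => integral_face_sq_le hT₀ hdiff i c).trans_eq ?_)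
    simp only [Finset.sum_const, Finset.card_univ, Fintype.card_fin, nsmul_eq_mul,
      Nat.cast_ofNat]
    ring
end

section
/- Let d, L, W ∈ ℕ with L, W ≥ 2, R ≥ 1, a < b, let σ : ℝ → ℝ be continuously differentiable with bounded value and derivative, and let θ, ϑ be parameters of neural networks with activation σ, the same architecture with at most L layers, widths at most W (with l_0 = d), and all weights and biases in [−R,R]. Set α = max{1, |a|, |b|, ‖σ‖_∞} and β = max{1, ‖σ'‖_∞}. Then for every 1 ≤ K ≤ L, sup_{x ∈ [a,b]^d} ‖(f_K^θ ∘ ⋯ ∘ f_1^θ)(x) − (f_K^ϑ ∘ ⋯ ∘ f_1^ϑ)(x)‖_∞ ≤ α (d+4) W^{K−1} R^{K−1} β^K ‖θ − ϑ‖_∞, where ‖θ − ϑ‖_∞ is the maximum over all corresponding weight and bias entries of their absolute difference and ‖·‖_∞ on vectors is the entrywise supremum norm. -/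
/-!
Let `δ = ‖θ − ϑ‖_∞` and let `e_K` be the error after `K` layers. Writing
`W_θ z − W_ϑ z' = (W_θ − W_ϑ) z + W_ϑ (z − z')`, and using that the input and every hidden
activation are bounded by `α` while `σ` is `β`-Lipschitz, gives
`e_1 ≤ β (d α + 1) δ` and `e_{K+1} ≤ β (W (α δ + R e_K) + δ)`.
The induction closes with the sharper constant `d + 4 − 3 / 2 ^ (K − 1)` in place of `d + 4`:
as `W α ≥ 2` and `W ≥ 2`, the new term `β (W α + 1) δ` fits into the slack `3 / 2 ^ K` gained
at each step.
-/

/-- Parameters (weights and biases) of a fully connected network with widths `l`. -/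
abbrev NNParams (l : ℕ → ℕ) : Type :=
  ∀ k : ℕ, (Fin (l (k + 1)) → Fin (l k) → ℝ) × (Fin (l (k + 1)) → ℝ)

/-- The affine map `z ↦ W_k z + b_k` of layer `k`. -/
noncomputable def layerAffine {l : ℕ → ℕ} (A : NNParams l) (k : ℕ)
    (z : Fin (l k) → ℝ) (i : Fin (l (k + 1))) : ℝ :=
  ∑ j, (A k).1 i j * z j + (A k).2 i

/-- Layer map number `k` (layers are numbered `0,…,L-1`): the activation `σ` is applied
after the affine map in every layer except the last one, which is purely affine. -/
noncomputable def layerFun (σ : ℝ → ℝ) (L : ℕ) {l : ℕ → ℕ} (A : NNParams l) (k : ℕ)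
    (z : Fin (l k) → ℝ) (i : Fin (l (k + 1))) : ℝ :=
  if k + 1 = L then layerAffine A k z i else σ (layerAffine A k z i)

/-- Output of the first `K` layers of the network with `L` layers,
i.e. `f_K ∘ ⋯ ∘ f_1`. -/
noncomputable def nnFwd (σ : ℝ → ℝ) (L : ℕ) {l : ℕ → ℕ} (A : NNParams l) :
    (K : ℕ) → (Fin (l 0) → ℝ) → Fin (l K) → ℝ
  | 0, z => z
  | K + 1, z => layerFun σ L A K (nnFwd σ L A K z)

/-- All weights and biases of the first `L` layers lie in `[-R, R]`. -/
def NNParams.inCube {l : ℕ → ℕ} (A : NNParams l) (L : ℕ) (R : ℝ) : Prop :=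
  ∀ k < L, (∀ i j, |(A k).1 i j| ≤ R) ∧ (∀ i, |(A k).2 i| ≤ R)

/-- Supremum distance `‖θ − ϑ‖_∞` between the entries of two parameter vectors. -/
noncomputable def paramDist {l : ℕ → ℕ} (L : ℕ) (A B : NNParams l) : ℝ :=
  ⨆ k : Fin L, max (⨆ i, ⨆ j, |(A (k : ℕ)).1 i j - (B (k : ℕ)).1 i j|)
    (⨆ i, |(A (k : ℕ)).2 i - (B (k : ℕ)).2 i|)

theorem abs_sub_le_of_abs_deriv_le {f : ℝ → ℝ} {C : ℝ} (hf : Differentiable ℝ f)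
    (hC : ∀ x, |deriv f x| ≤ C) (u v : ℝ) : |f u - f v| ≤ C * |u - v| := by
  simpa only [Real.norm_eq_abs] using convex_univ.norm_image_sub_le_of_norm_deriv_le
    (fun x _ => hf x) (fun x _ => hC x) (Set.mem_univ v) (Set.mem_univ u)

section paramDist

variable {l : ℕ → ℕ} {L : ℕ} (A B : NNParams l)

theorem layerDist_le_paramDist {k : ℕ} (hk : k < L) :
    max (⨆ i, ⨆ j, |(A k).1 i j - (B k).1 i j|) (⨆ i, |(A k).2 i - (B k).2 i|)
      ≤ paramDist L A B :=
  le_ciSup (f := fun k : Fin L => max (⨆ i, ⨆ j, |(A (k : ℕ)).1 i j - (B (k : ℕ)).1 i j|)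
    (⨆ i, |(A (k : ℕ)).2 i - (B (k : ℕ)).2 i|)) (Finite.bddAbove_range _) ⟨k, hk⟩

theorem abs_weight_sub_le_paramDist {k : ℕ} (hk : k < L) (i : Fin (l (k + 1))) (j : Fin (l k)) :
    |(A k).1 i j - (B k).1 i j| ≤ paramDist L A B :=
  calc |(A k).1 i j - (B k).1 i j| ≤ ⨆ j, |(A k).1 i j - (B k).1 i j| :=
        le_ciSup (f := fun j => |(A k).1 i j - (B k).1 i j|) (Finite.bddAbove_range _) j
    _ ≤ ⨆ i, ⨆ j, |(A k).1 i j - (B k).1 i j| :=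
        le_ciSup (f := fun i => ⨆ j, |(A k).1 i j - (B k).1 i j|) (Finite.bddAbove_range _) i
    _ ≤ paramDist L A B := (le_max_left _ _).trans (layerDist_le_paramDist A B hk)

theorem abs_bias_sub_le_paramDist {k : ℕ} (hk : k < L) (i : Fin (l (k + 1))) :
    |(A k).2 i - (B k).2 i| ≤ paramDist L A B :=
  calc |(A k).2 i - (B k).2 i| ≤ ⨆ i, |(A k).2 i - (B k).2 i| :=
        le_ciSup (f := fun i => |(A k).2 i - (B k).2 i|) (Finite.bddAbove_range _) i
    _ ≤ paramDist L A B := (le_max_right _ _).trans (layerDist_le_paramDist A B hk)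

theorem paramDist_nonneg : 0 ≤ paramDist L A B :=
  Real.iSup_nonneg fun _ => le_max_of_le_right (Real.iSup_nonneg fun _ => abs_nonneg _)

end paramDist

theorem abs_layerAffine_sub_le {l : ℕ → ℕ} (A B : NNParams l) (k : ℕ) {R δ M Δ : ℝ}
    (hB : ∀ i j, |(B k).1 i j| ≤ R) (hδw : ∀ i j, |(A k).1 i j - (B k).1 i j| ≤ δ)
    (hδb : ∀ i, |(A k).2 i - (B k).2 i| ≤ δ) {z z' : Fin (l k) → ℝ}
    (hz : ∀ j, |z j| ≤ M) (hzz' : ∀ j, |z j - z' j| ≤ Δ) (i : Fin (l (k + 1))) :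
    |layerAffine A k z i - layerAffine B k z' i| ≤ l k * (δ * M + R * Δ) + δ := by
  have hterm : ∀ j, |(A k).1 i j * z j - (B k).1 i j * z' j| ≤ δ * M + R * Δ := fun j =>
    calc |(A k).1 i j * z j - (B k).1 i j * z' j|
        = |((A k).1 i j - (B k).1 i j) * z j + (B k).1 i j * (z j - z' j)| := by ring_nf
      _ ≤ |((A k).1 i j - (B k).1 i j) * z j| + |(B k).1 i j * (z j - z' j)| :=
        abs_add_le _ _
      _ ≤ δ * M + R * Δ := by
        rw [abs_mul, abs_mul]
        exact add_le_add
          (mul_le_mul (hδw i j) (hz j) (abs_nonneg _) ((abs_nonneg _).trans (hδw i j)))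
          (mul_le_mul (hB i j) (hzz' j) (abs_nonneg _) ((abs_nonneg _).trans (hB i j)))
  have hsum : |∑ j, ((A k).1 i j * z j - (B k).1 i j * z' j)| ≤ l k * (δ * M + R * Δ) := by
    refine (Finset.abs_sum_le_sum_abs _ _).trans
      ((Finset.sum_le_sum fun j _ => hterm j).trans_eq ?_)
    rw [Finset.sum_const, Finset.card_univ, Fintype.card_fin, nsmul_eq_mul]
  calc |layerAffine A k z i - layerAffine B k z' i|
      = |∑ j, ((A k).1 i j * z j - (B k).1 i j * z' j) + ((A k).2 i - (B k).2 i)| := by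
        simp only [layerAffine, Finset.sum_sub_distrib]; ring_nf
    _ ≤ l k * (δ * M + R * Δ) + δ := (abs_add_le _ _).trans (add_le_add hsum (hδb i))

/-- The bound on the error after `n + 1` layers. -/
noncomputable def fwdErrBound (d W R α β δ : ℝ) (n : ℕ) : ℝ :=
  α * (d + 4 - 3 / 2 ^ n) * W ^ n * R ^ n * β ^ (n + 1) * δ

section fwdErrBound

variable {d W R α β δ : ℝ}

theorem fwdErrBound_nonneg (hd : 0 ≤ d) (hW : 0 ≤ W) (hR : 0 ≤ R) (hα : 0 ≤ α) (hβ : 0 ≤ β)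
    (hδ : 0 ≤ δ) (n : ℕ) : 0 ≤ fwdErrBound d W R α β δ n := by
  have : 3 / 2 ^ n ≤ (3 : ℝ) := div_le_self (by norm_num) (one_le_pow₀ (by norm_num))
  unfold fwdErrBound
  have : 0 ≤ d + 4 - 3 / 2 ^ n := by linarith
  positivity

theorem fwdErrBound_le (hW : 0 ≤ W) (hR : 0 ≤ R) (hα : 0 ≤ α) (hβ : 0 ≤ β) (hδ : 0 ≤ δ)
    (n : ℕ) : fwdErrBound d W R α β δ n ≤ α * (d + 4) * W ^ n * R ^ n * β ^ (n + 1) * δ := by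
  unfold fwdErrBound
  gcongr
  exact sub_le_self _ (by positivity)

theorem fwdErrBound_zero (hα : 1 ≤ α) (hβ : 0 ≤ β) (hδ : 0 ≤ δ) :
    β * (d * (δ * α) + δ) ≤ fwdErrBound d W R α β δ 0 := by
  unfold fwdErrBound
  nlinarith [mul_nonneg (mul_nonneg hβ hδ) (sub_nonneg.2 hα)]

theorem fwdErrBound_succ (hW : 2 ≤ W) (hR : 1 ≤ R) (hα : 1 ≤ α) (hβ : 1 ≤ β) (hδ : 0 ≤ δ)
    (n : ℕ) : β * (W * (δ * α + R * fwdErrBound d W R α β δ n) + δ)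
      ≤ fwdErrBound d W R α β δ (n + 1) := by
  set s := W ^ n * R ^ n * β ^ (n + 1) / 2 ^ n with hs_def
  have hs : 1 ≤ s := by
    rw [le_div_iff₀ (by positivity), one_mul]
    calc (2 : ℝ) ^ n = 2 ^ n * 1 * 1 := by ring
      _ ≤ W ^ n * R ^ n * β ^ (n + 1) := by
        gcongr
        exacts [one_le_pow₀ hR, one_le_pow₀ hβ]
  have hWα : 2 ≤ W * α := by nlinarith
  have hsucc : fwdErrBound d W R α β δ (n + 1)
      = W * R * β * fwdErrBound d W R α β δ n + 3 / 2 * α * W * R * β * δ * s := by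
    rw [hs_def]; unfold fwdErrBound; field_simp; ring
  have hslack : W * α + 1 ≤ 3 / 2 * (W * α) * (R * s) := by
    nlinarith [one_le_mul_of_one_le_of_one_le hR hs]
  calc β * (W * (δ * α + R * fwdErrBound d W R α β δ n) + δ)
      = β * δ * (W * α + 1) + W * R * β * fwdErrBound d W R α β δ n := by ring
    _ ≤ β * δ * (3 / 2 * (W * α) * (R * s)) + W * R * β * fwdErrBound d W R α β δ n := by
      gcongr
    _ = fwdErrBound d W R α β δ (n + 1) := by rw [hsucc]; ring

end fwdErrBound

theorem abs_layerFun_sub_le {σ : ℝ → ℝ} {β : ℝ} (hσ : ∀ u v, |σ u - σ v| ≤ β * |u - v|)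
    (hβ : 1 ≤ β) (L : ℕ) {l : ℕ → ℕ} (A B : NNParams l) (k : ℕ) (z z' : Fin (l k) → ℝ)
    (i : Fin (l (k + 1))) :
    |layerFun σ L A k z i - layerFun σ L B k z' i|
      ≤ β * |layerAffine A k z i - layerAffine B k z' i| := by
  unfold layerFun
  split_ifs
  · exact le_mul_of_one_le_left (abs_nonneg _) hβ
  · exact hσ _ _

theorem abs_nnFwd_le {σ : ℝ → ℝ} {M : ℝ} (hσ : ∀ y, |σ y| ≤ M) {L : ℕ} {l : ℕ → ℕ}
    (A : NNParams l) {x : Fin (l 0) → ℝ} (hx : ∀ i, |x i| ≤ M) :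
    ∀ k < L, ∀ i, |nnFwd σ L A k x i| ≤ M
  | 0, _, i => hx i
  | k + 1, hk, i => by
    simp only [nnFwd, layerFun, if_neg hk.ne]
    exact hσ _

theorem abs_nnFwd_sub_le_fwdErrBound {σ : ℝ → ℝ} {α β R : ℝ} {L W : ℕ} {l : ℕ → ℕ}
    (hσ : ∀ y, |σ y| ≤ α) (hσlip : ∀ u v, |σ u - σ v| ≤ β * |u - v|)
    (hα : 1 ≤ α) (hβ : 1 ≤ β) (hR : 1 ≤ R) (hW : 2 ≤ W) (hlW : ∀ k, 0 < k → l k ≤ W)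
    (A B : NNParams l) (hB : B.inCube L R) {x : Fin (l 0) → ℝ} (hx : ∀ i, |x i| ≤ α) :
    ∀ n, n + 1 ≤ L → ∀ i, |nnFwd σ L A (n + 1) x i - nnFwd σ L B (n + 1) x i|
      ≤ fwdErrBound (l 0) W R α β (paramDist L A B) n := by
  have hδ := paramDist_nonneg (L := L) A B
  have hlayer : ∀ k < L, ∀ {z z' : Fin (l k) → ℝ} {Δ : ℝ}, (∀ j, |z j| ≤ α) →
      (∀ j, |z j - z' j| ≤ Δ) → ∀ i, |layerFun σ L A k z i - layerFun σ L B k z' i|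
        ≤ β * (l k * (paramDist L A B * α + R * Δ) + paramDist L A B) :=
    fun k hk z z' Δ hz hzz' i => (abs_layerFun_sub_le hσlip hβ L A B k z z' i).trans <|
      mul_le_mul_of_nonneg_left
        (abs_layerAffine_sub_le A B k (hB k hk).1 (abs_weight_sub_le_paramDist A B hk)
          (abs_bias_sub_le_paramDist A B hk) hz hzz' i) (by linarith)
  intro n
  induction n with
  | zero =>
    intro hL i
    refine (hlayer 0 hL (Δ := 0) hx (fun j => by simp [nnFwd]) i).trans ?_
    simpa using fwdErrBound_zero hα (by linarith) hδ
  | succ n ih =>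
    intro hL i
    refine (hlayer (n + 1) hL (abs_nnFwd_le hσ A hx (n + 1) hL) (ih (by omega)) i).trans ?_
    refine le_trans ?_ (fwdErrBound_succ (by exact_mod_cast hW) hR hα hβ hδ n)
    gcongr
    · exact add_nonneg (mul_nonneg hδ (by linarith)) (mul_nonneg (by linarith)
        (fwdErrBound_nonneg (Nat.cast_nonneg _) (by positivity) (by linarith) (by linarith)
          (by linarith) hδ n))
    · exact_mod_cast hlW (n + 1) n.succ_pos

theorem nn_lipschitz_in_params_general
    (d L W : ℕ) (hW : 2 ≤ W) (R : ℝ) (hR : 1 ≤ R)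
    (a b : ℝ)
    (σ : ℝ → ℝ) (hσ : ContDiff ℝ 1 σ)
    (hσbd : BddAbove (Set.range fun x => |σ x|))
    (hσ'bd : BddAbove (Set.range fun x => |deriv σ x|))
    (l : ℕ → ℕ) (hl0 : l 0 = d) (hlW : ∀ k, 0 < k → l k ≤ W)
    (A B : NNParams l) (hB : B.inCube L R)
    (α β : ℝ)
    (hα : α = max 1 (max |a| (max |b| (⨆ x : ℝ, |σ x|))))
    (hβ : β = max 1 (⨆ x : ℝ, |deriv σ x|)) :
    ∀ K : ℕ, 1 ≤ K → K ≤ L →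
      ∀ x : Fin (l 0) → ℝ, (∀ i, x i ∈ Set.Icc a b) →
        ∀ i : Fin (l K),
          |nnFwd σ L A K x i - nnFwd σ L B K x i|
            ≤ α * (d + 4) * (W : ℝ) ^ (K - 1) * R ^ (K - 1) * β ^ K
              * paramDist L A B := by
  intro K hK1 hKL x hx i
  obtain ⟨n, rfl⟩ : ∃ n, K = n + 1 := ⟨K - 1, by omega⟩
  have hα1 : 1 ≤ α := hα ▸ le_max_left _ _
  have hβ1 : 1 ≤ β := hβ ▸ le_max_left _ _
  have hσα : ∀ y, |σ y| ≤ α := fun y => (le_ciSup hσbd y).trans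
    (hα ▸ le_max_of_le_right (le_max_of_le_right (le_max_right _ _)))
  have hσ'β : ∀ y, |deriv σ y| ≤ β := fun y => (le_ciSup hσ'bd y).trans (hβ ▸ le_max_right _ _)
  have haα : |a| ≤ α := hα ▸ le_max_of_le_right (le_max_left _ _)
  have hbα : |b| ≤ α := hα ▸ le_max_of_le_right (le_max_of_le_right (le_max_left _ _))
  have hxα : ∀ j, |x j| ≤ α := fun j => abs_le.2
    ⟨by linarith [neg_abs_le a, (hx j).1], by linarith [le_abs_self b, (hx j).2]⟩
  have hbound := abs_nnFwd_sub_le_fwdErrBound hσα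
    (abs_sub_le_of_abs_deriv_le (hσ.differentiable one_ne_zero) hσ'β) hα1 hβ1 hR hW hlW A B hB
    hxα n hKL i
  rw [hl0] at hbound
  simpa only [Nat.add_sub_cancel] using hbound.trans
    (fwdErrBound_le (by positivity) (by linarith) (by linarith) (by linarith)
      (paramDist_nonneg A B) n)

/-- **Lipschitz continuity of a neural network in its parameters.**
For networks with `L` layers, widths at most `W` (input width `d`), weights and biases
bounded by `R ≥ 1`, and a `C¹` activation `σ` with bounded value and derivative, for
every `1 ≤ K ≤ L`,
`sup_{x∈[a,b]^d} ‖(f_K^θ∘⋯∘f_1^θ)(x) − (f_K^ϑ∘⋯∘f_1^ϑ)(x)‖_∞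
  ≤ α (d+4) W^{K−1} R^{K−1} β^K ‖θ−ϑ‖_∞`,
where `α = max{1,|a|,|b|,‖σ‖_∞}` and `β = max{1,‖σ'‖_∞}`. -/
theorem nn_lipschitz_in_params
    (d L W : ℕ) (hL : 2 ≤ L) (hW : 2 ≤ W) (R : ℝ) (hR : 1 ≤ R)
    (a b : ℝ) (hab : a < b)
    (σ : ℝ → ℝ) (hσ : ContDiff ℝ 1 σ)
    (hσbd : BddAbove (Set.range fun x => |σ x|))
    (hσ'bd : BddAbove (Set.range fun x => |deriv σ x|))
    (l : ℕ → ℕ) (hl0 : l 0 = d) (hlW : ∀ k, 0 < k → l k ≤ W)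
    (A B : NNParams l) (hA : A.inCube L R) (hB : B.inCube L R)
    (α β : ℝ)
    (hα : α = max 1 (max |a| (max |b| (⨆ x : ℝ, |σ x|))))
    (hβ : β = max 1 (⨆ x : ℝ, |deriv σ x|)) :
    ∀ K : ℕ, 1 ≤ K → K ≤ L →
      ∀ x : Fin (l 0) → ℝ, (∀ i, x i ∈ Set.Icc a b) →
        ∀ i : Fin (l K),
          |nnFwd σ L A K x i - nnFwd σ L B K x i|
            ≤ α * (d + 4) * (W : ℝ) ^ (K - 1) * R ^ (K - 1) * β ^ K
              * paramDist L A B :=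
  nn_lipschitz_in_params_general d L W hW R hR a b σ hσ hσbd hσ'bd l hl0 hlW A B hB α β hα hβ
end
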